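/- arXiv:1306.6655 — 6 statements merged into one kernel-verified Lean document; each statement's English description precedes it below -/
import Mathlib

section
/- Let n = (n1,n2) with n1 + n2 > 0 and let K be a complex (n1+n2)×(n1+n2) matrix with operator norm ‖K‖ ≤ 1. Then the polynomial p(z1,z2) = det(I_{n1+n2} − K Z_n(z1,z2)) has no zeros in the open unit bidisk, i.e., p(z1,z2) ≠ 0 whenever |z1| < 1 and |z2| < 1. -/
noncomputable def opNorm {m : ℕ} (K : Matrix (Fin m) (Fin m) ℂ) : ℝ :=
  ‖Matrix.toEuclideanCLM (𝕜 := ℂ) K‖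

noncomputable def Zn (n1 n2 : ℕ) (z1 z2 : ℂ) : Matrix (Fin (n1 + n2)) (Fin (n1 + n2)) ℂ :=
  Matrix.diagonal fun i => if (i : ℕ) < n1 then z1 else z2

open Matrix
open scoped Matrix.Norms.L2Operator

lemma opNorm_eq_l2_opNorm {m : ℕ} (K : Matrix (Fin m) (Fin m) ℂ) : opNorm K = ‖K‖ := rfl

lemma l2_opNorm_Zn_lt_one (n1 n2 : ℕ) {z1 z2 : ℂ} (h1 : ‖z1‖ < 1) (h2 : ‖z2‖ < 1) :
    ‖Zn n1 n2 z1 z2‖ < 1 := by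
  rw [Zn, l2_opNorm_diagonal, pi_norm_lt_iff one_pos]
  intro i
  split_ifs
  exacts [h1, h2]

lemma det_one_sub_ne_zero_of_l2_opNorm_lt_one {𝕜 ι : Type*} [RCLike 𝕜] [Fintype ι]
    [DecidableEq ι] {A : Matrix ι ι 𝕜} (hA : ‖A‖ < 1) : (1 - A).det ≠ 0 :=
  ((isUnit_iff_isUnit_det _).mp (isUnit_one_sub_of_norm_lt_one hA)).ne_zero

theorem stmt2_general (n1 n2 : ℕ)
    (K : Matrix (Fin (n1 + n2)) (Fin (n1 + n2)) ℂ) (hK : opNorm K ≤ 1) :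
    ∀ z1 z2 : ℂ, ‖z1‖ < 1 → ‖z2‖ < 1 →
      (1 - K * Zn n1 n2 z1 z2).det ≠ 0 := by
  intro z1 z2 h1 h2
  rw [opNorm_eq_l2_opNorm] at hK
  apply det_one_sub_ne_zero_of_l2_opNorm_lt_one
  calc ‖K * Zn n1 n2 z1 z2‖ ≤ ‖K‖ * ‖Zn n1 n2 z1 z2‖ := l2_opNorm_mul _ _
    _ < 1 :=
      mul_lt_one_of_nonneg_of_lt_one_right hK (norm_nonneg _) (l2_opNorm_Zn_lt_one _ _ h1 h2)

theorem stmt2 (n1 n2 : ℕ) (hn : 0 < n1 + n2)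
    (K : Matrix (Fin (n1 + n2)) (Fin (n1 + n2)) ℂ) (hK : opNorm K ≤ 1) :
    ∀ z1 z2 : ℂ, ‖z1‖ < 1 → ‖z2‖ < 1 →
      (1 - K * Zn n1 n2 z1 z2).det ≠ 0 :=
  stmt2_general n1 n2 K hK
end

section
/- Every stable irreducible non-constant bivariate complex polynomial p is scattering Schur; that is, p and its reverse ←p have no common non-unit polynomial factor. -/
/-!
If an irreducible `p` had a common non-unit factor with `←p`, that factor would be associate to
`p`, so `p ∣ ←p`. A non-constant polynomial, say of positive degree in `z₁`, has a zero `(w₁, w₂)`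
with `|w₂| = 1`: choose `w₂` on the circle off the zeros of the leading coefficient in `z₁`.
Stability forces `|w₁| > 1`. Then `←p(w₁, w₂) = 0`, and reflecting through the torus gives a zero
`(1/w̄₁, 1/w̄₂)` of `p` in the closed bidisk.
-/

open MvPolynomial

/-- The reverse of a bivariate polynomial of bidegree `(n1, n2)`:
the coefficient of `z1^j z2^k` is the conjugate of the coefficient of
`z1^(n1-j) z2^(n2-k)` in `p`. -/
noncomputable def revPoly (n1 n2 : ℕ) (p : MvPolynomial (Fin 2) ℂ) :
    MvPolynomial (Fin 2) ℂ :=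
  ∑ j ∈ Finset.range (n1 + 1), ∑ k ∈ Finset.range (n2 + 1),
    monomial (Finsupp.single (0 : Fin 2) j + Finsupp.single (1 : Fin 2) k)
      ((starRingEnd ℂ)
        (coeff (Finsupp.single (0 : Fin 2) (n1 - j) + Finsupp.single (1 : Fin 2) (n2 - k)) p))

open Finset ComplexConjugate

local notation "ex₂" j:max k:max => Finsupp.single (0 : Fin 2) j + Finsupp.single (1 : Fin 2) k

lemma Complex.sphere_infinite : (Metric.sphere (0 : ℂ) 1).Infinite :=
  (isPreconnected_sphere (by simp [Complex.rank_real_complex]) 0 1).infinite_of_nontrivial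
    ⟨1, by simp, -1, by simp, by norm_num⟩

namespace MvPolynomial

lemma totalDegree_eq_zero_of_forall_degreeOf_eq_zero {σ R : Type*} [CommSemiring R]
    {p : MvPolynomial σ R} (h : ∀ i, p.degreeOf i = 0) : p.totalDegree = 0 :=
  (totalDegree_eq_zero_iff σ p).2 fun _ hm i ↦ Nat.le_zero.1 (h i ▸ monomial_le_degreeOf i hm)

lemma exists_eval_ne_zero_of_infinite {σ R : Type*} [Finite σ] [CommRing R] [IsDomain R]
    {P : MvPolynomial σ R} (hP : P ≠ 0) {S : Set R} (hS : S.Infinite) :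
    ∃ x : σ → R, (∀ i, x i ∈ S) ∧ eval x P ≠ 0 := by
  obtain ⟨T, hTS, hT⟩ := hS.exists_subset_card_eq (P.totalDegree + 1)
  by_contra! h
  exact hP <| eq_zero_of_eval_zero_at_prod_finset P (fun _ ↦ T)
    (fun i ↦ hT ▸ Nat.lt_succ_of_le (degreeOf_le_totalDegree P i))
    (fun x hx ↦ h x fun i ↦ hTS (hx i))

lemma sum_support_eq_sum_range_range {R M : Type*} [CommSemiring R] [AddCommMonoid M]
    {p : MvPolynomial (Fin 2) R} {n1 n2 : ℕ} (hd1 : p.degreeOf 0 ≤ n1) (hd2 : p.degreeOf 1 ≤ n2)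
    {F : (Fin 2 →₀ ℕ) → M} (hF : ∀ d, coeff d p = 0 → F d = 0) :
    ∑ d ∈ p.support, F d = ∑ j ∈ range (n1 + 1), ∑ k ∈ range (n2 + 1), F (ex₂ j k) := by
  have hex : ∀ d : Fin 2 →₀ ℕ, d = ex₂ (d 0) (d 1) := fun d ↦ by
    ext i; fin_cases i <;> simp
  rw [← sum_product']
  refine sum_of_injOn (fun d ↦ (d 0, d 1)) (fun d _ d' _ h ↦ ?_) (fun d hd ↦ ?_)
    (fun jk _ hjk ↦ hF _ ?_) (fun d _ ↦ by rw [← hex d])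
  · ext i; fin_cases i
    exacts [congrArg Prod.fst h, congrArg Prod.snd h]
  · simp only [coe_product, coe_range, Set.mem_prod, Set.mem_Iio, Nat.lt_succ_iff]
    exact ⟨(monomial_le_degreeOf 0 hd).trans hd1, (monomial_le_degreeOf 1 hd).trans hd2⟩
  · by_contra h
    exact hjk ⟨_, mem_support_iff.2 h, by simp⟩

lemma eval_fin_two_eq_sum_range_range {R : Type*} [CommSemiring R]
    {p : MvPolynomial (Fin 2) R} {n1 n2 : ℕ} (hd1 : p.degreeOf 0 ≤ n1) (hd2 : p.degreeOf 1 ≤ n2)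
    (z1 z2 : R) :
    eval ![z1, z2] p =
      ∑ j ∈ range (n1 + 1), ∑ k ∈ range (n2 + 1), coeff (ex₂ j k) p * (z1 ^ j * z2 ^ k) := by
  rw [eval_eq']
  simp only [Fin.prod_univ_two, Matrix.cons_val_zero, Matrix.cons_val_one]
  rw [sum_support_eq_sum_range_range hd1 hd2 (F := fun d ↦ coeff d p * (z1 ^ d 0 * z2 ^ d 1))
    (fun d h ↦ by simp [h])]
  simp

end MvPolynomial

lemma eval_revPoly {p : MvPolynomial (Fin 2) ℂ} {n1 n2 : ℕ}
    (hd1 : p.degreeOf 0 ≤ n1) (hd2 : p.degreeOf 1 ≤ n2) {w1 w2 : ℂ} (hw1 : w1 ≠ 0) (hw2 : w2 ≠ 0) :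
    eval ![w1, w2] (revPoly n1 n2 p) =
      w1 ^ n1 * w2 ^ n2 * conj (eval ![(conj w1)⁻¹, (conj w2)⁻¹] p) := by
  rw [revPoly, map_sum, eval_fin_two_eq_sum_range_range hd1 hd2, map_sum, mul_sum]
  conv_rhs => rw [← sum_range_reflect]
  refine sum_congr rfl fun j hj ↦ ?_
  rw [map_sum, map_sum, mul_sum]
  conv_rhs => rw [← sum_range_reflect]
  refine sum_congr rfl fun k hk ↦ ?_
  have hj : j ≤ n1 := Nat.lt_succ_iff.1 (mem_range.1 hj)
  have hk : k ≤ n2 := Nat.lt_succ_iff.1 (mem_range.1 hk)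
  simp [eval_monomial, pow_sub₀, hw1, hw2, hj, hk]
  field_simp

lemma exists_eval_eq_zero_norm_snd_eq_one_of_degreeOf_zero_pos {p : MvPolynomial (Fin 2) ℂ}
    (hp : 0 < p.degreeOf 0) : ∃ z w : ℂ, ‖w‖ = 1 ∧ eval ![z, w] p = 0 := by
  have hL : (finSuccEquiv ℂ 1 p).leadingCoeff ≠ 0 := by
    simpa using ne_zero_of_degreeOf_ne_zero hp.ne'
  obtain ⟨x, hx, hxL⟩ := exists_eval_ne_zero_of_infinite hL Complex.sphere_infinite
  have hdeg : 0 < ((finSuccEquiv ℂ 1 p).map (eval x)).degree := by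
    rw [Polynomial.degree_map_eq_of_leadingCoeff_ne_zero _ hxL,
      degree_finSuccEquiv (ne_zero_of_degreeOf_ne_zero hp.ne')]
    exact_mod_cast hp
  obtain ⟨z, hz⟩ := Complex.exists_root hdeg
  refine ⟨z, x 0, by simpa using hx 0, ?_⟩
  rw [show ![z, x 0] = Fin.cons z x by ext i; fin_cases i <;> rfl, eval_eq_eval_mv_eval']
  exact hz

lemma exists_eval_eq_zero_norm_fst_eq_one_of_degreeOf_one_pos {p : MvPolynomial (Fin 2) ℂ}
    (hp : 0 < p.degreeOf 1) : ∃ z w : ℂ, ‖z‖ = 1 ∧ eval ![z, w] p = 0 := by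
  have hswap : (rename (Equiv.swap 0 1) p).degreeOf 0 = p.degreeOf 1 := by
    simpa using degreeOf_rename_of_injective (p := p) (Equiv.swap (0 : Fin 2) 1).injective 1
  obtain ⟨z, w, hw, hzw⟩ := exists_eval_eq_zero_norm_snd_eq_one_of_degreeOf_zero_pos (hswap ▸ hp)
  refine ⟨w, z, hw, ?_⟩
  rwa [eval_rename, show ![z, w] ∘ Equiv.swap 0 1 = ![w, z] by ext i; fin_cases i <;> rfl] at hzw

def IsBidiskStable (p : MvPolynomial (Fin 2) ℂ) : Prop :=
  ∀ z1 z2 : ℂ, ‖z1‖ ≤ 1 → ‖z2‖ ≤ 1 → eval ![z1, z2] p ≠ 0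

namespace IsBidiskStable

variable {p : MvPolynomial (Fin 2) ℂ}

lemma exists_eval_eq_zero_one_le_norm (hp : IsBidiskStable p) (hdeg : 0 < p.totalDegree) :
    ∃ w1 w2 : ℂ, 1 ≤ ‖w1‖ ∧ 1 ≤ ‖w2‖ ∧ eval ![w1, w2] p = 0 := by
  have hpos : 0 < p.degreeOf 0 ∨ 0 < p.degreeOf 1 := by
    by_contra! h
    have := totalDegree_eq_zero_of_forall_degreeOf_eq_zero
      (Fin.forall_fin_two.2 ⟨Nat.le_zero.1 h.1, Nat.le_zero.1 h.2⟩)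
    omega
  rcases hpos with h0 | h1
  · obtain ⟨z, w, hw, hzw⟩ := exists_eval_eq_zero_norm_snd_eq_one_of_degreeOf_zero_pos h0
    exact ⟨z, w, le_of_not_ge fun hz ↦ hp z w hz hw.le hzw, hw.ge, hzw⟩
  · obtain ⟨z, w, hz, hzw⟩ := exists_eval_eq_zero_norm_fst_eq_one_of_degreeOf_one_pos h1
    exact ⟨z, w, hz.ge, le_of_not_ge fun hw ↦ hp z w hz.le hw hzw, hzw⟩

lemma not_dvd_revPoly (hp : IsBidiskStable p) (hdeg : 0 < p.totalDegree) {n1 n2 : ℕ}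
    (hd1 : p.degreeOf 0 ≤ n1) (hd2 : p.degreeOf 1 ≤ n2) : ¬ p ∣ revPoly n1 n2 p := by
  rintro ⟨s, hs⟩
  obtain ⟨w1, w2, h1, h2, hz⟩ := hp.exists_eval_eq_zero_one_le_norm hdeg
  have hw1 : w1 ≠ 0 := norm_pos_iff.1 (one_pos.trans_le h1)
  have hw2 : w2 ≠ 0 := norm_pos_iff.1 (one_pos.trans_le h2)
  have hrev := eval_revPoly hd1 hd2 hw1 hw2
  rw [hs, map_mul, hz, zero_mul] at hrev
  refine hp _ _ ?_ ?_ (by simpa [hw1, hw2] using hrev.symm)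
  · simpa using inv_le_one_of_one_le₀ h1
  · simpa using inv_le_one_of_one_le₀ h2

end IsBidiskStable

theorem stmt6 (n1 n2 : ℕ) (p : MvPolynomial (Fin 2) ℂ)
    (hnc : 0 < p.totalDegree)
    (hd1 : p.degreeOf 0 = n1) (hd2 : p.degreeOf 1 = n2)
    (hstable : ∀ z1 z2 : ℂ, ‖z1‖ ≤ 1 → ‖z2‖ ≤ 1 →
      eval ![z1, z2] p ≠ 0)
    (hirr : Irreducible p) :
    ∀ q : MvPolynomial (Fin 2) ℂ, q ∣ p → q ∣ revPoly n1 n2 p → IsUnit q := by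
  intro q hqp hqrev
  refine (hirr.dvd_iff.1 hqp).resolve_right fun hpq ↦ ?_
  exact IsBidiskStable.not_dvd_revPoly hstable hnc hd1.le hd2.le (hpq.dvd.trans hqrev)
end

section
/- Let p be a semi-stable bivariate complex polynomial of bidegree (n1,n2) with p(0,0) = 1. If the coefficient of z1^{n1} z2^{n2} in p has modulus 1, then for every (z1,z2) on the unit torus (|z1| = |z2| = 1), all zeros of the one-variable polynomial t ↦ p(t·z1, t·z2) lie on the unit circle |t| = 1. -/
/-!
Restricted to the complex line `t ↦ t • (z₁, z₂)`, `p` becomes a one-variable polynomial `q` with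
`q 0 = p (0, 0) = 1`. The partial degree bounds make `z₁ ^ n₁ z₂ ^ n₂` the only monomial of `p` of
total degree `n₁ + n₂`, so the leading coefficient of `q` is the top coefficient of `p` times
`z₁ ^ n₁ z₂ ^ n₂`, of modulus one. By Vieta the moduli of the roots of `q` then multiply to
`|q 0| / |lead q| = 1`, while semi-stability puts every root outside the open unit disc; hence
all roots lie on the unit circle.
-/

open scoped Polynomial

theorem Finsupp.eq_of_le_of_degree_eq {σ : Type*} {d m : σ →₀ ℕ} (hle : d ≤ m)
    (h : d.degree = m.degree) : d = m := by
  have hsum := congrArg Finsupp.degree (add_tsub_cancel_of_le hle)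
  rw [map_add, h, add_eq_left, Finsupp.degree_eq_zero_iff, tsub_eq_zero_iff_le] at hsum
  exact le_antisymm hle hsum

namespace MvPolynomial

variable {σ R : Type*} [CommSemiring R]

noncomputable def restrictToLine (z : σ → R) : MvPolynomial σ R →ₐ[R] R[X] :=
  aeval fun i => Polynomial.C (z i) * Polynomial.X

theorem eval_restrictToLine (z : σ → R) (p : MvPolynomial σ R) (t : R) :
    (restrictToLine z p).eval t = eval (t • z) p := by
  suffices (Polynomial.evalRingHom t).comp (restrictToLine z : MvPolynomial σ R →+* R[X]) =
      eval (t • z) from RingHom.congr_fun this p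
  ext <;> simp [restrictToLine, mul_comm (z _)]

theorem restrictToLine_monomial (z : σ → R) (d : σ →₀ ℕ) (c : R) :
    restrictToLine z (monomial d c) =
      Polynomial.C (eval z (monomial d c)) * Polynomial.X ^ d.degree := by
  simp [restrictToLine, aeval_monomial, eval_monomial, Finsupp.prod, mul_pow,
    Finset.prod_mul_distrib, Finsupp.degree_apply, Finset.prod_pow_eq_pow_sum, mul_assoc]

theorem coeff_restrictToLine (z : σ → R) (p : MvPolynomial σ R) (n : ℕ) :
    (restrictToLine z p).coeff n = eval z (homogeneousComponent n p) := by
  conv_lhs => rw [p.as_sum]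
  simp only [map_sum, Polynomial.finsetSum_coeff, restrictToLine_monomial,
    Polynomial.coeff_C_mul_X_pow, homogeneousComponent_apply, Finset.sum_filter]
  exact Finset.sum_congr rfl fun d _ => by split_ifs <;> simp_all [eq_comm]

variable {p : MvPolynomial σ R} {m : σ →₀ ℕ}

theorem homogeneousComponent_degree_of_forall_le (h : ∀ d ∈ p.support, d ≤ m) :
    homogeneousComponent m.degree p = monomial m (coeff m p) := by
  rw [homogeneousComponent_apply, Finset.sum_eq_single m]
  · intro d hd hne
    rw [Finset.mem_filter] at hd
    exact absurd (Finsupp.eq_of_le_of_degree_eq (h d hd.1) hd.2) hne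
  · intro hm
    rw [Finset.mem_filter, mem_support_iff, not_and, not_imp_not] at hm
    rw [hm rfl, monomial_zero]

theorem homogeneousComponent_eq_zero_of_forall_le (h : ∀ d ∈ p.support, d ≤ m) {n : ℕ}
    (hn : m.degree < n) : homogeneousComponent n p = 0 :=
  homogeneousComponent_eq_zero' _ _ fun d hd => (Finsupp.degree_mono (h d hd)).trans_lt hn |>.ne

theorem leadingCoeff_restrictToLine (z : σ → R) (h : ∀ d ∈ p.support, d ≤ m)
    (hz : eval z (monomial m (coeff m p)) ≠ 0) :
    (restrictToLine z p).leadingCoeff = eval z (monomial m (coeff m p)) := by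
  have htop : (restrictToLine z p).coeff m.degree = eval z (monomial m (coeff m p)) := by
    rw [coeff_restrictToLine, homogeneousComponent_degree_of_forall_le h]
  have hdeg : (restrictToLine z p).natDegree ≤ m.degree :=
    Polynomial.natDegree_le_iff_coeff_eq_zero.2 fun n hn => by
      rw [coeff_restrictToLine, homogeneousComponent_eq_zero_of_forall_le h (mod_cast hn), map_zero]
  rw [Polynomial.leadingCoeff,
    Polynomial.natDegree_eq_of_le_of_coeff_ne_zero hdeg (htop ▸ hz), htop]

end MvPolynomial

namespace Polynomial

variable {K : Type*} [NormedField K] [IsAlgClosed K]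

theorem prod_nnnorm_roots_eq_one {q : K[X]} (hq : q ≠ 0)
    (h : ‖q.coeff 0‖₊ = ‖q.leadingCoeff‖₊) : (q.roots.map (‖·‖₊)).prod = 1 := by
  have hroots :=
    congrArg (‖·‖₊) (IsAlgClosed.splits q).coeff_zero_eq_leadingCoeff_mul_prod_roots
  simp only [nnnorm_mul, nnnorm_pow, nnnorm_neg, nnnorm_one, one_pow, one_mul, h] at hroots
  rw [show ‖q.roots.prod‖₊ = (q.roots.map (‖·‖₊)).prod from
    map_multiset_prod (nnnormHom : K →*₀ NNReal) _] at hroots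
  have hlc : ‖q.leadingCoeff‖₊ ≠ 0 := by simpa using hq
  exact (mul_eq_left₀ hlc).1 hroots.symm

theorem norm_eq_one_of_eval_eq_zero {q : K[X]} (hq : q ≠ 0)
    (h : ‖q.coeff 0‖ = ‖q.leadingCoeff‖) (hdisc : ∀ r : K, ‖r‖ < 1 → q.eval r ≠ 0)
    {t : K} (ht : q.eval t = 0) : ‖t‖ = 1 := by
  classical
  have hge : ∀ r ∈ q.roots, 1 ≤ ‖r‖₊ := fun r hr =>
    not_lt.1 fun hlt => hdisc r (mod_cast hlt) (isRoot_of_mem_roots hr)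
  have ht' : t ∈ q.roots := (mem_roots hq).2 ht
  have hprod := prod_nnnorm_roots_eq_one hq (NNReal.coe_injective h)
  rw [← Multiset.prod_map_erase ht'] at hprod
  have hrest : 1 ≤ ((q.roots.erase t).map (‖·‖₊)).prod := Multiset.one_le_prod_of_one_le
    (by simpa using fun r hr => hge r (Multiset.mem_of_mem_erase hr))
  exact congrArg NNReal.toReal ((mul_eq_one_iff_of_one_le (hge t ht') hrest).1 hprod).1

end Polynomial

open MvPolynomial

theorem stmt7 (n1 n2 : ℕ) (p : MvPolynomial (Fin 2) ℂ)
    (h0 : coeff 0 p = 1)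
    (hd1 : p.degreeOf 0 = n1) (hd2 : p.degreeOf 1 = n2)
    (hss : ∀ z1 z2 : ℂ, ‖z1‖ < 1 → ‖z2‖ < 1 →
      eval ![z1, z2] p ≠ 0)
    (htop : ‖
      (coeff (Finsupp.single (0 : Fin 2) n1 + Finsupp.single (1 : Fin 2) n2) p)‖ = 1) :
    ∀ z1 z2 : ℂ, ‖z1‖ = 1 → ‖z2‖ = 1 →
      ∀ t : ℂ, eval ![t * z1, t * z2] p = 0 → ‖t‖ = 1 := by
  intro z1 z2 hz1 hz2 t ht
  set m : Fin 2 →₀ ℕ := Finsupp.single 0 n1 + Finsupp.single 1 n2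
  have hle : ∀ d ∈ p.support, d ≤ m := fun d hd i => by
    fin_cases i
    · simpa [m, ← hd1] using monomial_le_degreeOf 0 hd
    · simpa [m, ← hd2] using monomial_le_degreeOf 1 hd
  set q := restrictToLine ![z1, z2] p
  have hline (s : ℂ) : q.eval s = eval ![s * z1, s * z2] p := by
    simp [q, eval_restrictToLine]
  have hmono : ‖eval ![z1, z2] (monomial m (coeff m p))‖ = 1 := by
    rw [eval_monomial, Finsupp.prod_fintype _ _ (fun _ => pow_zero _)]
    simp [m, htop, hz1, hz2]
  have hlead : ‖q.leadingCoeff‖ = 1 := by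
    rwa [leadingCoeff_restrictToLine _ hle (norm_ne_zero_iff.1 (hmono ▸ one_ne_zero))]
  have hq : q ≠ 0 := fun h => by simp [h] at hlead
  have hcoeff0 : q.coeff 0 = 1 := by simp [q, coeff_restrictToLine, h0]
  refine Polynomial.norm_eq_one_of_eval_eq_zero hq (by rw [hcoeff0, hlead, norm_one])
    (fun r hr => hline r ▸ hss (r * z1) (r * z2) (by rwa [norm_mul, hz1, mul_one])
      (by rwa [norm_mul, hz2, mul_one])) (hline t ▸ ht)
end

section
/- Let n = (n1,n2) ≠ (0,0), let K be a unitary (n1+n2)×(n1+n2) complex matrix, and let p(z1,z2) = det(I_{n1+n2} − K Z_n(z1,z2)). If p has bidegree exactly (n1,n2), then ←p = α·p with the unimodular constant α = det(−K*) (where K* is the conjugate transpose of K); in particular p is self-reversive up to a unimodular constant. -/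
/-!
Write `Z = Z_n(z₁, z₂)` with `z₁ z₂ ≠ 0`. Because `p` has bidegree at most `n`, its reverse
evaluates to `z₁^{n₁} z₂^{n₂} · conj p(1/z̄) = det Z · conj det(I - K Z̄⁻¹)`, and conjugation
transposes the matrix, giving `det Z · det(I - Z⁻¹ K*) = det(Z - K*)`. Since `K* K = I`, also
`det(-K*) · det(I - K Z) = det(Z - K*)`. Polynomials agreeing off the coordinate axes are equal,
and `det(-K*)` is unimodular because `-K*` is unitary.
-/

open MvPolynomial

/-- The diagonal matrix with `X 0` in the first `n1` diagonal entries and `X 1`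
in the last `n2` diagonal entries, over the bivariate polynomial ring. -/
noncomputable def ZnPoly (n1 n2 : ℕ) :
    Matrix (Fin (n1 + n2)) (Fin (n1 + n2)) (MvPolynomial (Fin 2) ℂ) :=
  Matrix.diagonal fun i => if (i : ℕ) < n1 then X 0 else X 1

open Matrix Finset

theorem Matrix.neg_conjTranspose_mem_unitaryGroup {ι 𝕜 : Type*} [Fintype ι] [DecidableEq ι]
    [CommRing 𝕜] [StarRing 𝕜] {K : Matrix ι ι 𝕜} (hK : K ∈ unitaryGroup ι 𝕜) :
    -Kᴴ ∈ unitaryGroup ι 𝕜 := by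
  rw [mem_unitaryGroup_iff'] at hK
  rw [mem_unitaryGroup_iff, star_eq_conjTranspose, conjTranspose_neg, conjTranspose_conjTranspose,
    neg_mul_neg, ← star_eq_conjTranspose, hK]

theorem Matrix.det_diagonal_mul_star_det_one_sub {ι 𝕜 : Type*} [Fintype ι] [DecidableEq ι]
    [Field 𝕜] [StarRing 𝕜] {K : Matrix ι ι 𝕜} (hK : Kᴴ * K = 1) {d : ι → 𝕜} (hd : ∀ i, d i ≠ 0) :
    (∏ i, d i) * star (det (1 - K * diagonal fun i => (star (d i))⁻¹))
      = det (-Kᴴ) * det (1 - K * diagonal d) := by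
  have hstar : star (det (1 - K * diagonal fun i => (star (d i))⁻¹))
      = det (1 - diagonal (fun i => (d i)⁻¹) * Kᴴ) := by
    rw [← det_conjTranspose, conjTranspose_sub, conjTranspose_one, conjTranspose_mul,
      diagonal_conjTranspose]
    congr
    funext i
    simp [star_inv₀]
  have hinv : diagonal d * diagonal (fun i => (d i)⁻¹) = 1 := by
    simp [diagonal_mul_diagonal, hd]
  rw [hstar, ← det_diagonal, ← det_mul, ← det_mul, mul_sub, mul_sub, ← Matrix.mul_assoc, hinv,
    ← Matrix.mul_assoc]
  simp only [mul_one, one_mul, Matrix.neg_mul, hK, sub_neg_eq_add]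
  congr 1
  abel

theorem MvPolynomial.eq_of_eval_eq_of_ne_zero {σ R : Type*} [CommRing R] [IsDomain R] [Infinite R]
    {p q : MvPolynomial σ R} (h : ∀ x : σ → R, (∀ i, x i ≠ 0) → eval x p = eval x q) : p = q :=
  funext_set (fun _ => {0}ᶜ) (fun _ => (Set.finite_singleton 0).infinite_compl)
    fun x hx => h x fun i => hx i trivial

theorem eval_monomial_single_add_single {R : Type*} [CommSemiring R] (z : Fin 2 → R) (a : R)
    (j k : ℕ) :
    eval z (monomial (Finsupp.single 0 j + Finsupp.single 1 k) a) = a * z 0 ^ j * z 1 ^ k := by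
  rw [eval_monomial, Finsupp.prod_add_index' (fun _ => pow_zero _) fun _ _ _ => pow_add _ _ _]
  simp [mul_assoc]

theorem eval_eq_sum_range_sum_range {R : Type*} [CommSemiring R] {n1 n2 : ℕ}
    {p : MvPolynomial (Fin 2) R} (h1 : p.degreeOf 0 ≤ n1) (h2 : p.degreeOf 1 ≤ n2) (z : Fin 2 → R) :
    eval z p = ∑ j ∈ range (n1 + 1), ∑ k ∈ range (n2 + 1),
      coeff (Finsupp.single 0 j + Finsupp.single 1 k) p * z 0 ^ j * z 1 ^ k := by
  set φ : ℕ × ℕ → Fin 2 →₀ ℕ := fun jk => Finsupp.single 0 jk.1 + Finsupp.single 1 jk.2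
  have hφ : Function.Injective φ := fun a b hab =>
    Prod.ext (by simpa [φ] using DFunLike.congr_fun hab 0)
      (by simpa [φ] using DFunLike.congr_fun hab 1)
  have hsupp : p.support ⊆ (range (n1 + 1) ×ˢ range (n2 + 1)).image φ := by
    intro d hd
    refine mem_image.mpr ⟨(d 0, d 1), ?_, ?_⟩
    · simp only [mem_product, mem_range]
      exact ⟨Nat.lt_succ_of_le (degreeOf_le_iff.mp h1 d hd),
        Nat.lt_succ_of_le (degreeOf_le_iff.mp h2 d hd)⟩
    · ext i
      fin_cases i <;> simp [φ]
  rw [eval_eq', sum_subset hsupp, sum_image hφ.injOn, sum_product]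
  · simp [φ, Fin.prod_univ_two, mul_assoc]
  · intro d _ hd
    rw [notMem_support_iff.mp hd, zero_mul]

theorem eval_revPoly_s11 {n1 n2 : ℕ} {p : MvPolynomial (Fin 2) ℂ} (h1 : p.degreeOf 0 ≤ n1)
    (h2 : p.degreeOf 1 ≤ n2) {z : Fin 2 → ℂ} (hz : ∀ i, z i ≠ 0) :
    eval z (revPoly n1 n2 p) = z 0 ^ n1 * z 1 ^ n2 * star (eval (fun i => (star (z i))⁻¹) p) := by
  rw [eval_eq_sum_range_sum_range h1 h2, revPoly]
  simp only [map_sum, eval_monomial_single_add_single, star_sum, mul_sum]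
  rw [← sum_range_reflect]
  refine sum_congr rfl fun j hj => ?_
  rw [← sum_range_reflect]
  refine sum_congr rfl fun k hk => ?_
  rw [mem_range] at hj hk
  have hj' : j ≤ n1 := Nat.le_of_lt_succ hj
  have hk' : k ≤ n2 := Nat.le_of_lt_succ hk
  simp only [add_tsub_cancel_right, star_mul', star_pow, star_inv₀, star_star]
  rw [Complex.star_def, Nat.sub_sub_self hj', Nat.sub_sub_self hk', ← pow_sub_mul_pow (z 0) hj',
    ← pow_sub_mul_pow (z 1) hk', inv_pow, inv_pow]
  field_simp [hz 0, hz 1]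

theorem eval_det_one_sub_mul_ZnPoly {n1 n2 : ℕ} (K : Matrix (Fin (n1 + n2)) (Fin (n1 + n2)) ℂ)
    (z : Fin 2 → ℂ) :
    eval z (1 - K.map C * ZnPoly n1 n2).det
      = (1 - K * diagonal fun i : Fin (n1 + n2) => z (if (i : ℕ) < n1 then 0 else 1)).det := by
  rw [RingHom.map_det, RingHom.mapMatrix_apply]
  congr 1
  ext i j
  simp [ZnPoly, Matrix.mul_apply, Matrix.one_apply, diagonal_apply, apply_ite (eval z),
    apply_ite z, mul_ite]

theorem Fin.prod_univ_add_apply_ite_lt {M : Type*} [CommMonoid M] {n1 n2 : ℕ} (z : Fin 2 → M) :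
    ∏ i : Fin (n1 + n2), z (if (i : ℕ) < n1 then 0 else 1) = z 0 ^ n1 * z 1 ^ n2 := by
  simp [Fin.prod_univ_add]

theorem stmt11_general (n1 n2 : ℕ)
    (K : Matrix (Fin (n1 + n2)) (Fin (n1 + n2)) ℂ)
    (hK : K ∈ Matrix.unitaryGroup (Fin (n1 + n2)) ℂ)
    (p : MvPolynomial (Fin 2) ℂ)
    (hp : p = (1 - K.map MvPolynomial.C * ZnPoly n1 n2).det)
    (hd1 : p.degreeOf 0 = n1) (hd2 : p.degreeOf 1 = n2) :
    ‖(-K.conjTranspose).det‖ = 1 ∧ revPoly n1 n2 p = C ((-K.conjTranspose).det) * p := by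
  refine ⟨CStarRing.norm_of_mem_unitary
    (det_of_mem_unitary (neg_conjTranspose_mem_unitaryGroup hK)),
    eq_of_eval_eq_of_ne_zero fun z hz => ?_⟩
  rw [eval_revPoly_s11 hd1.le hd2.le hz, map_mul, eval_C, hp, eval_det_one_sub_mul_ZnPoly,
    eval_det_one_sub_mul_ZnPoly, ← Fin.prod_univ_add_apply_ite_lt]
  exact det_diagonal_mul_star_det_one_sub hK.1 fun i => hz _

theorem stmt11 (n1 n2 : ℕ) (hn : (n1, n2) ≠ (0, 0))
    (K : Matrix (Fin (n1 + n2)) (Fin (n1 + n2)) ℂ)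
    (hK : K ∈ Matrix.unitaryGroup (Fin (n1 + n2)) ℂ)
    (p : MvPolynomial (Fin 2) ℂ)
    (hp : p = (1 - K.map MvPolynomial.C * ZnPoly n1 n2).det)
    (hd1 : p.degreeOf 0 = n1) (hd2 : p.degreeOf 1 = n2) :
    ‖(-K.conjTranspose).det‖ = 1 ∧ revPoly n1 n2 p = C ((-K.conjTranspose).det) * p :=
  stmt11_general n1 n2 K hK p hp hd1 hd2
end

section
/- Let M be a polynomial in one complex variable with coefficients that are d×d complex Hermitian matrices (i.e., M(s) = B_0 + B_1 s + ... + B_k s^k with each B_j Hermitian, B_k ≠ 0). If the bivariate polynomial det(t·I_d − M(s)) in the variables (t,s) has total degree at most d, then M is linear, i.e., k ≤ 1. -/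
/-!
Substitute `t = u sᵏ` into `P(t, s) = det (t I - M(s))`. Every entry of `u sᵏ I - M(s)` has
`s`-degree at most `k`, with `sᵏ`-coefficient `u I - Bₖ`, so the coefficient of `s^(dk)` is the
characteristic polynomial of `Bₖ`. On the other hand a monomial `tᵃ sᵇ` of `P` becomes
`uᵃ s^(ka + b)`, and when `a + b ≤ d` and `k ≥ 2` the exponent `ka + b` reaches `dk` only for
`tᵈ`. Hence `charpoly Bₖ = uᵈ`, so `Bₖ` is nilpotent, and a nilpotent Hermitian matrix vanishes.
-/

open MvPolynomial

theorem Matrix.IsHermitian.eq_zero_of_charpoly_eq_X_pow {𝕜 n : Type*} [RCLike 𝕜] [Fintype n]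
    [DecidableEq n] {A : Matrix n n 𝕜} (hA : A.IsHermitian)
    (h : A.charpoly = Polynomial.X ^ Fintype.card n) : A = 0 := by
  have h0 : (0 : Matrix n n 𝕜).IsHermitian := Matrix.isHermitian_zero
  rw [← hA.eigenvalues_eq_zero_iff,
    (hA.eigenvalues_eq_eigenvalues_iff h0).mpr (by rw [h, Matrix.charpoly_zero]),
    h0.eigenvalues_eq_zero_iff]

theorem Polynomial.coeff_det_of_natDegree_le {n R : Type*} [Fintype n] [DecidableEq n]
    [CommRing R] (N : Matrix n n (Polynomial R)) {k : ℕ} (h : ∀ i j, (N i j).natDegree ≤ k) :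
    N.det.coeff (Fintype.card n * k) = (N.map (·.coeff k)).det := by
  simp only [Matrix.det_apply, Polynomial.finsetSum_coeff]
  refine Finset.sum_congr rfl fun σ _ => ?_
  rw [Polynomial.coeff_smul, ← Finset.card_univ,
    Polynomial.coeff_prod_of_natDegree_le _ _ k fun i _ => h (σ i) i]
  rfl

theorem Finsupp.degree_eq_add_degree_erase {σ : Type*} (m : σ →₀ ℕ) (i₀ : σ) :
    m.degree = m i₀ + (m.erase i₀).degree := by
  conv_lhs => rw [← Finsupp.single_add_erase i₀ m]
  rw [map_add, Finsupp.degree_single]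

section WeightedSubst

variable {σ R : Type*} [CommSemiring R] [DecidableEq σ]

/-- `X i₀ ↦ u sᵏ` and `X i ↦ s` for `i ≠ i₀`, where `u` is the inner and `s` the outer variable. -/
noncomputable def weightedSubst (i₀ : σ) (k : ℕ) (i : σ) : Polynomial (Polynomial R) :=
  if i = i₀ then Polynomial.C Polynomial.X * Polynomial.X ^ k else Polynomial.X

theorem aeval_weightedSubst_monomial (i₀ : σ) (k : ℕ) (m : σ →₀ ℕ) (c : R) :
    aeval (weightedSubst i₀ k) (monomial m c) =
      Polynomial.C (Polynomial.C c * Polynomial.X ^ m i₀) *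
        Polynomial.X ^ (k * m i₀ + (m.erase i₀).degree) := by
  have hsplit :
      monomial m c = monomial (Finsupp.single i₀ (m i₀)) c * monomial (m.erase i₀) 1 := by
    rw [monomial_mul, mul_one, Finsupp.single_add_erase]
  have hrest : aeval (weightedSubst (R := R) i₀ k) (monomial (m.erase i₀) (1 : R)) =
      Polynomial.X ^ (m.erase i₀).degree := by
    rw [aeval_monomial, map_one, one_mul, Finsupp.prod, Finsupp.degree_apply,
      ← Finset.prod_pow_eq_pow_sum]
    refine Finset.prod_congr rfl fun i hi => ?_
    rw [weightedSubst, if_neg (by rintro rfl; simp at hi)]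
  rw [hsplit, map_mul, hrest, aeval_monomial, Finsupp.prod_single_index (by simp), weightedSubst,
    if_pos rfl]
  simp only [Polynomial.algebraMap_apply, Algebra.algebraMap_self_apply, mul_pow, ← pow_mul,
    map_mul, map_pow, pow_add]
  ring

theorem coeff_aeval_weightedSubst_monomial (i₀ : σ) {d k : ℕ} (hk : 2 ≤ k) {m : σ →₀ ℕ}
    (hm : m.degree ≤ d) (c : R) :
    (aeval (weightedSubst i₀ k) (monomial m c)).coeff (d * k) =
      if m = Finsupp.single i₀ d then Polynomial.C c * Polynomial.X ^ d else 0 := by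
  rw [aeval_weightedSubst_monomial, Polynomial.coeff_C_mul_X_pow]
  by_cases hm' : m = Finsupp.single i₀ d
  · subst hm'
    rw [Finsupp.single_eq_same, Finsupp.erase_single, map_zero, add_zero, mul_comm, if_pos rfl,
      if_pos rfl]
  · rw [if_neg hm', if_neg]
    intro hdk
    rw [Finsupp.degree_eq_add_degree_erase m i₀] at hm
    have hd : m i₀ = d := by nlinarith
    have hrest : (m.erase i₀).degree = 0 := by omega
    rw [Finsupp.degree_eq_zero_iff] at hrest
    exact hm' (by rw [← Finsupp.single_add_erase i₀ m, hd, hrest, add_zero])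

theorem coeff_aeval_weightedSubst (i₀ : σ) {d k : ℕ} (hk : 2 ≤ k) {P : MvPolynomial σ R}
    (hP : P.totalDegree ≤ d) :
    (aeval (weightedSubst i₀ k) P).coeff (d * k) =
      Polynomial.C (P.coeff (Finsupp.single i₀ d)) * Polynomial.X ^ d := by
  conv_lhs => rw [P.as_sum, map_sum, Polynomial.finsetSum_coeff]
  rw [Finset.sum_congr rfl fun m hm => coeff_aeval_weightedSubst_monomial i₀ hk
    ((le_totalDegree hm).trans hP) _, Finset.sum_ite_eq']
  split_ifs with h
  · rfl
  · rw [notMem_support_iff.mp h, map_zero, zero_mul]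

end WeightedSubst

section BivariateCharmatrix

variable {n R : Type*} [DecidableEq n] [CommRing R] {k : ℕ}

noncomputable def bivariateCharmatrix (B : Fin (k + 1) → Matrix n n R) :
    Matrix n n (MvPolynomial ℕ R) :=
  Matrix.of fun i j => (if i = j then X 0 else 0) - ∑ l : Fin (k + 1), C (B l i j) * X 1 ^ (l : ℕ)

theorem aeval_weightedSubst_bivariateCharmatrix (B : Fin (k + 1) → Matrix n n R) (i j : n) :
    aeval (weightedSubst 0 k) (bivariateCharmatrix B i j) =
      (if i = j then Polynomial.C Polynomial.X * Polynomial.X ^ k else 0) -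
        ∑ l : Fin (k + 1), Polynomial.C (Polynomial.C (B l i j)) * Polynomial.X ^ (l : ℕ) := by
  simp only [bivariateCharmatrix, Matrix.of_apply, map_sub, map_sum, map_mul, map_pow, aeval_X,
    aeval_C, apply_ite (aeval _), map_zero, weightedSubst, ↓reduceIte, if_neg one_ne_zero,
    Polynomial.algebraMap_apply, Algebra.algebraMap_self_apply]

theorem coeff_aeval_weightedSubst_bivariateCharmatrix (B : Fin (k + 1) → Matrix n n R) (i j : n)
    (e : ℕ) :
    (aeval (weightedSubst 0 k) (bivariateCharmatrix B i j)).coeff e =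
      (if i = j ∧ e = k then Polynomial.X else 0) -
        ∑ l : Fin (k + 1), if e = l then Polynomial.C (B l i j) else 0 := by
  rw [aeval_weightedSubst_bivariateCharmatrix, Polynomial.coeff_sub, Polynomial.finsetSum_coeff]
  simp only [Polynomial.coeff_C_mul_X_pow, apply_ite (Polynomial.coeff · e),
    Polynomial.coeff_zero, ite_and]

theorem coeff_aeval_weightedSubst_det_bivariateCharmatrix [Fintype n]
    (B : Fin (k + 1) → Matrix n n R) :
    (aeval (weightedSubst 0 k) (bivariateCharmatrix B).det).coeff (Fintype.card n * k) =
      (B (Fin.last k)).charpoly := by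
  rw [AlgHom.map_det, Polynomial.coeff_det_of_natDegree_le]
  · congr 1
    ext i j : 1
    have hlast (l : Fin (k + 1)) : k = l ↔ l = Fin.last k := by
      rw [Fin.ext_iff, Fin.val_last, eq_comm]
    simp only [Matrix.map_apply, AlgHom.mapMatrix_apply,
      coeff_aeval_weightedSubst_bivariateCharmatrix, and_true, hlast, Finset.sum_ite_eq',
      Finset.mem_univ, if_true, Matrix.charmatrix_apply, Matrix.diagonal_apply]
  · intro i j
    rw [Polynomial.natDegree_le_iff_coeff_eq_zero]
    intro e he
    simp only [AlgHom.mapMatrix_apply, Matrix.map_apply,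
      coeff_aeval_weightedSubst_bivariateCharmatrix, he.ne', and_false, if_false, zero_sub,
      neg_eq_zero]
    exact Finset.sum_eq_zero fun l _ => if_neg (by omega)

end BivariateCharmatrix

theorem stmt15 (d k : ℕ) (B : Fin (k + 1) → Matrix (Fin d) (Fin d) ℂ)
    (hHerm : ∀ l, (B l).IsHermitian) (hBk : B (Fin.last k) ≠ 0)
    (hdeg : (Matrix.det (Matrix.of fun i j : Fin d =>
        (if i = j then X 0 else 0) -
          ∑ l : Fin (k + 1), C (B l i j) * X 1 ^ (l : ℕ))).totalDegree ≤ d) :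
    k ≤ 1 := by
  by_contra! hk
  have hchar := coeff_aeval_weightedSubst_det_bivariateCharmatrix B
  rw [Fintype.card_fin, coeff_aeval_weightedSubst 0 hk (P := (bivariateCharmatrix B).det) hdeg]
    at hchar
  have hmonic := (B (Fin.last k)).charpoly_monic.leadingCoeff
  rw [← hchar, Polynomial.leadingCoeff_C_mul_X_pow] at hmonic
  rw [hmonic, map_one, one_mul] at hchar
  exact hBk ((hHerm _).eq_zero_of_charpoly_eq_X_pow (by rw [← hchar, Fintype.card_fin]))
end

section
/- Let p be a bivariate real polynomial with p(x1,x2) = det(I_2 + x1·A1 + x2·A2) for all (x1,x2) ∈ ℝ², where A1 and A2 are 2×2 complex Hermitian matrices. Then there exist 2×2 real symmetric matrices Â1 and Â2 such that p(x1,x2) = det(I_2 + x1·Â1 + x2·Â2) for all (x1,x2) ∈ ℝ². -/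
/-!
Diagonalize `A1 = V D V*` by a unitary `V`. Conjugation by `V` preserves determinants, so
`p(x1, x2) = det(1 + x1 D + x2 M)` with `D` real diagonal and `M = V* A2 V` Hermitian. For a
`2 × 2` Hermitian matrix `N`, `det N = Re N₀₀ · Re N₁₁ - |N₀₁|²` depends on `N₀₁` only through its
modulus, so `M` may be replaced by the real symmetric matrix with off-diagonal entry `|M₀₁|`.
-/

open MvPolynomial Matrix Unitary

theorem Matrix.det_conjStarAlgAut {n R : Type*} [Fintype n] [DecidableEq n] [CommRing R]
    [StarRing R] (u : unitary (Matrix n n R)) (N : Matrix n n R) :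
    (conjStarAlgAut R _ u N).det = N.det :=
  det_conj_of_mul_eq_one (coe_mul_star_self u) (coe_star_mul_self u)

theorem Matrix.IsHermitian.det_fin_two_eq {𝕜 : Type*} [RCLike 𝕜] {M : Matrix (Fin 2) (Fin 2) 𝕜}
    (hM : M.IsHermitian) :
    M.det = ((RCLike.re (M 0 0) * RCLike.re (M 1 1) - ‖M 0 1‖ ^ 2 : ℝ) : 𝕜) := by
  have h00 : M 0 0 = RCLike.re (M 0 0) := (RCLike.conj_eq_iff_re.mp (hM.apply 0 0)).symm
  have h11 : M 1 1 = RCLike.re (M 1 1) := (RCLike.conj_eq_iff_re.mp (hM.apply 1 1)).symm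
  rw [det_fin_two, ← hM.apply 1 0, RCLike.star_def, RCLike.mul_conj]
  nth_rw 1 [h00, h11]
  push_cast
  ring

theorem Matrix.IsHermitian.det_one_add_smul_diagonal_add_smul {𝕜 : Type*} [RCLike 𝕜]
    (d : Fin 2 → ℝ) {M : Matrix (Fin 2) (Fin 2) 𝕜} (hM : M.IsHermitian) (x y : ℝ) :
    (1 + (x : 𝕜) • diagonal (RCLike.ofReal ∘ d) + (y : 𝕜) • M).det =
      (((1 + x • diagonal d +
        y • !![RCLike.re (M 0 0), ‖M 0 1‖; ‖M 0 1‖, RCLike.re (M 1 1)]).det : ℝ) : 𝕜) := by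
  have hreal (t : ℝ) : IsSelfAdjoint (t : 𝕜) := RCLike.conj_ofReal t
  have hN : (1 + (x : 𝕜) • diagonal (RCLike.ofReal ∘ d) + (y : 𝕜) • M).IsHermitian :=
    (isHermitian_one.add ((isHermitian_diagonal_of_self_adjoint _
      (funext fun i => hreal (d i))).smul (hreal x))).add (hM.smul (hreal y))
  rw [hN.det_fin_two_eq, det_fin_two]
  simp only [algebraMap_smul, Fin.isValue, add_apply, one_apply_eq, smul_apply, diagonal_apply_eq,
    Function.comp_apply, RCLike.real_smul_ofReal, map_add, RCLike.one_re, RCLike.mul_re,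
    RCLike.ofReal_re, RCLike.ofReal_im, mul_zero, sub_zero, RCLike.smul_re, ne_eq, zero_ne_one,
    not_false_eq_true, one_apply_ne, diagonal_apply_ne, smul_zero, add_zero, zero_add, norm_smul,
    Real.norm_eq_abs, mul_pow, sq_abs, map_sub, map_mul, map_one, map_pow, smul_of, smul_cons,
    smul_eq_mul, smul_empty, of_apply, cons_val', cons_val_zero, cons_val_fin_one, cons_val_one,
    one_ne_zero]
  ring

theorem stmt17 (p : MvPolynomial (Fin 2) ℝ)
    (A1 A2 : Matrix (Fin 2) (Fin 2) ℂ)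
    (hA1H : A1.IsHermitian) (hA2H : A2.IsHermitian)
    (hrep : ∀ x1 x2 : ℝ, (eval ![x1, x2] p : ℂ) =
      (1 + (x1 : ℂ) • A1 + (x2 : ℂ) • A2).det) :
    ∃ B1 B2 : Matrix (Fin 2) (Fin 2) ℝ, B1.IsSymm ∧ B2.IsSymm ∧
      ∀ x1 x2 : ℝ, eval ![x1, x2] p = (1 + x1 • B1 + x2 • B2).det := by
  set φ := conjStarAlgAut ℂ _ hA1H.eigenvectorUnitary
  set M := φ.symm A2
  have hM : M.IsHermitian := by
    rw [IsHermitian, ← star_eq_conjTranspose, ← map_star, hA2H.star_eq]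
  have hconj (x1 x2 : ℝ) : 1 + (x1 : ℂ) • A1 + (x2 : ℂ) • A2 =
      φ (1 + (x1 : ℂ) • diagonal (RCLike.ofReal ∘ hA1H.eigenvalues) + (x2 : ℂ) • M) := by
    rw [map_add, map_add, map_one, map_smul, map_smul, ← hA1H.spectral_theorem,
      StarAlgEquiv.apply_symm_apply]
  refine ⟨diagonal hA1H.eigenvalues, !![(M 0 0).re, ‖M 0 1‖; ‖M 0 1‖, (M 1 1).re],
    isSymm_diagonal _, ?_, fun x1 x2 => Complex.ofReal_injective ?_⟩
  · ext i j
    fin_cases i <;> fin_cases j <;> rfl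
  · rw [hrep, hconj, det_conjStarAlgAut]
    exact hM.det_one_add_smul_diagonal_add_smul hA1H.eigenvalues x1 x2
end
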